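/- Let N ≥ 2, let f be continuously differentiable and nowhere zero on Ω, and let P := 1 − (1/(f†f)) f f†. Then the matrix n_P := i·√2·( √((N−1)/N)·1_N − √(N/(N−1))·P ) is skew-Hermitian and traceless (so n_P ∈ su(N)), has unit norm (n_P, n_P) = −½ tr(n_P²) = 1, and is orthogonal to both tangent vectors: (n_P, [∂_L P, P]) = 0 and (n_P, [∂_R P, P]) = 0, where (A,B) := −½ tr(AB). Hence n_P is a unit normal to the surface associated with f. -/

import Mathlib

/-!
`n_P` is a polynomial in `P`, so it commutes with `P`, and cyclicity of the trace gives
`tr(n_P [D, P]) = tr(n_P D P) - tr(P n_P D) = 0` for every matrix `D`, in particular for `∂_L P`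
and `∂_R P`. The remaining claims only use that `P` is a Hermitian idempotent of trace `N - 1`,
together with `√((N-1)/N) · √(N/(N-1)) = 1`.
-/

open Matrix

noncomputable section

attribute [local instance] Matrix.normedAddCommGroup Matrix.normedSpace

/-- Vectors in ℂ^N. -/
abbrev Vec (N : ℕ) := Fin N → ℂ

/-- Hermitian inner product v† w. -/
def hermIP {N : ℕ} (v w : Vec N) : ℂ := dotProduct (star v) w

/-- The matrix v w†. -/
def outerM {N : ℕ} (v w : Vec N) : Matrix (Fin N) (Fin N) ℂ := vecMulVec v (star w)

/-- The projector P = 1 − (1/(f†f)) f f†. -/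
def projM {N : ℕ} (f : Vec N) : Matrix (Fin N) (Fin N) ℂ :=
  1 - (1 / hermIP f f) • outerM f f

/-- Matrix commutator [A,B] = AB − BA. -/
def mcomm {N : ℕ} (A B : Matrix (Fin N) (Fin N) ℂ) : Matrix (Fin N) (Fin N) ℂ :=
  A * B - B * A

/-- Light-cone direction ξ_L. -/
def dL : ℝ × ℝ := (1, 0)

/-- Light-cone direction ξ_R. -/
def dR : ℝ × ℝ := (0, 1)

/-- Directional (partial) derivative in direction `v`. -/
def pdv {E : Type*} [NormedAddCommGroup E] [NormedSpace ℝ E]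
    (v : ℝ × ℝ) (g : ℝ × ℝ → E) (p : ℝ × ℝ) : E := fderiv ℝ g p v

/-- The CP^{N−1} Euler–Lagrange equation
P·(∂_L∂_R f − (1/(f†f))((f†∂_Rf)∂_Lf + (f†∂_Lf)∂_Rf)) = 0 at a point. -/
def EL {N : ℕ} (f : ℝ × ℝ → Vec N) (p : ℝ × ℝ) : Prop :=
  projM (f p) *ᵥ (pdv dL (fun q => pdv dR f q) p
    - (1 / hermIP (f p) (f p)) • (hermIP (f p) (pdv dR f p) • pdv dL f p
      + hermIP (f p) (pdv dL f p) • pdv dR f p)) = 0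

open ComplexOrder in
lemma hermIP_self_ne_zero {N : ℕ} {v : Vec N} (h : v ≠ 0) : hermIP v v ≠ 0 :=
  fun h0 => h (dotProduct_star_self_eq_zero.mp h0)

lemma star_hermIP_self {N : ℕ} (v : Vec N) : star (hermIP v v) = hermIP v v := by
  simp [hermIP, dotProduct, star_sum, mul_comm]

lemma isHermitian_outerM_self {N : ℕ} (v : Vec N) : (outerM v v).IsHermitian := by
  ext i j; simp [outerM, conjTranspose_apply, vecMulVec_apply, mul_comm]

lemma outerM_self_mul_self {N : ℕ} (v : Vec N) :
    outerM v v * outerM v v = hermIP v v • outerM v v := by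
  rw [outerM, vecMulVec_mul_vecMulVec, vecMulVec_smul]
  rfl

lemma trace_outerM_self {N : ℕ} (v : Vec N) : (outerM v v).trace = hermIP v v := by
  rw [outerM, trace_vecMulVec, dotProduct_comm]
  rfl

lemma isHermitian_projM {N : ℕ} (v : Vec N) : (projM v).IsHermitian := by
  simp [projM, IsHermitian, conjTranspose_smul, (isHermitian_outerM_self v).eq, star_hermIP_self]

lemma projM_mul_self {N : ℕ} {v : Vec N} (h : v ≠ 0) : projM v * projM v = projM v := by
  have hv := hermIP_self_ne_zero h
  simp only [projM, sub_mul, mul_sub, one_mul, mul_one, Matrix.smul_mul, Matrix.mul_smul,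
    outerM_self_mul_self, smul_smul]
  rw [one_div_mul_cancel hv, mul_one]
  abel

lemma trace_projM {N : ℕ} {v : Vec N} (h : v ≠ 0) : (projM v).trace = N - 1 := by
  simp [projM, trace_sub, trace_outerM_self, hermIP_self_ne_zero h]

lemma sqrt_sub_one_div_mul_sqrt_div_sub_one {n : ℝ} (hn : 1 < n) :
    √((n - 1) / n) * √(n / (n - 1)) = 1 := by
  rw [← Real.sqrt_mul (div_nonneg (by linarith) (by linarith)), div_mul_div_comm,
    mul_comm (n - 1), div_self (by nlinarith), Real.sqrt_one]

lemma sqrt_sub_one_div_mul_self_mul {n : ℝ} (hn : 1 ≤ n) :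
    √((n - 1) / n) * √((n - 1) / n) * n = n - 1 := by
  rw [Real.mul_self_sqrt (div_nonneg (by linarith) (by linarith)),
    div_mul_cancel₀ _ (by linarith)]

section SuNormal

variable {N : ℕ} {P : Matrix (Fin N) (Fin N) ℂ}

/-- `n_P` as a function of the projector `P`. -/
def suNormal (P : Matrix (Fin N) (Fin N) ℂ) : Matrix (Fin N) (Fin N) ℂ :=
  (Complex.I * (Real.sqrt 2 : ℂ)) •
    ((Real.sqrt (((N : ℝ) - 1) / (N : ℝ)) : ℂ) • (1 : Matrix (Fin N) (Fin N) ℂ)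
      - (Real.sqrt ((N : ℝ) / ((N : ℝ) - 1)) : ℂ) • P)

lemma conjTranspose_suNormal (hP : P.IsHermitian) : (suNormal P)ᴴ = -suNormal P := by
  simp [suNormal, conjTranspose_smul, hP.eq, Complex.conj_ofReal]

lemma commute_suNormal (P : Matrix (Fin N) (Fin N) ℂ) : Commute (suNormal P) P :=
  (((Commute.one_left P).smul_left _).sub_left ((Commute.refl P).smul_left _)).smul_left _

lemma trace_suNormal (hN : 1 < N) (htr : P.trace = N - 1) : (suNormal P).trace = 0 := by
  have hn : (1 : ℝ) < N := by exact_mod_cast hN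
  have hab := congrArg Complex.ofReal (sqrt_sub_one_div_mul_sqrt_div_sub_one hn)
  have haa := congrArg Complex.ofReal (sqrt_sub_one_div_mul_self_mul hn.le)
  push_cast at hab haa
  simp only [suNormal, trace_smul, trace_sub, trace_one, htr, Fintype.card_fin, smul_eq_mul]
  set a : ℂ := ((√((N - 1) / N) : ℝ) : ℂ)
  set b : ℂ := ((√(N / (N - 1)) : ℝ) : ℂ)
  set c : ℂ := Complex.I * (√2 : ℝ)
  linear_combination c * (-a * N) * hab + c * b * haa

lemma trace_suNormal_mul_self (hN : 1 < N) (hPP : P * P = P) (htr : P.trace = N - 1) :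
    (suNormal P * suNormal P).trace = -2 := by
  have hn : (1 : ℝ) < N := by exact_mod_cast hN
  have hab := congrArg Complex.ofReal (sqrt_sub_one_div_mul_sqrt_div_sub_one hn)
  have haa := congrArg Complex.ofReal (sqrt_sub_one_div_mul_self_mul hn.le)
  push_cast at hab haa
  have hcc : Complex.I * (√2 : ℝ) * (Complex.I * (√2 : ℝ)) = -2 := by
    rw [mul_mul_mul_comm, Complex.I_mul_I, ← Complex.ofReal_mul,
      Real.mul_self_sqrt zero_le_two]
    norm_num
  simp only [suNormal, Matrix.smul_mul, Matrix.mul_smul, sub_mul, mul_sub, one_mul, mul_one,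
    smul_sub, smul_smul, hPP, trace_smul, trace_sub, trace_one, htr, Fintype.card_fin, smul_eq_mul]
  set a : ℂ := ((√((N - 1) / N) : ℝ) : ℂ)
  set b : ℂ := ((√(N / (N - 1)) : ℝ) : ℂ)
  set c : ℂ := Complex.I * (√2 : ℝ)
  linear_combination (a * a * N - 2 * a * b * (N - 1) + b * b * (N - 1)) * hcc
    - 2 * (haa - 2 * (N - 1) * hab - b * b * haa + N * (a * b + 1) * hab)

end SuNormal

lemma trace_mul_mcomm_eq_zero {N : ℕ} {X P : Matrix (Fin N) (Fin N) ℂ} (h : Commute X P)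
    (D : Matrix (Fin N) (Fin N) ℂ) : (X * mcomm D P).trace = 0 := by
  rw [mcomm, mul_sub, trace_sub, ← mul_assoc, ← mul_assoc, trace_mul_comm (X * D),
    ← mul_assoc, h.eq, sub_self]

theorem stmt14_general {N : ℕ} (hN : 2 ≤ N) (Ω : Set (ℝ × ℝ))
    (f : ℝ × ℝ → Vec N) (hfz : ∀ p ∈ Ω, f p ≠ 0)
    (nP : ℝ × ℝ → Matrix (Fin N) (Fin N) ℂ)
    (hnP : nP = fun p => (Complex.I * (Real.sqrt 2 : ℂ)) •
      ((Real.sqrt (((N : ℝ) - 1) / (N : ℝ)) : ℂ) • (1 : Matrix (Fin N) (Fin N) ℂ)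
        - (Real.sqrt ((N : ℝ) / ((N : ℝ) - 1)) : ℂ) • projM (f p))) :
    ∀ p ∈ Ω,
      (nP p)ᴴ = - nP p ∧ (nP p).trace = 0 ∧
      -(1 / 2 : ℂ) * (nP p * nP p).trace = 1 ∧
      -(1 / 2 : ℂ) * (nP p * mcomm (pdv dL (fun q => projM (f q)) p) (projM (f p))).trace = 0 ∧
      -(1 / 2 : ℂ) * (nP p * mcomm (pdv dR (fun q => projM (f q)) p) (projM (f p))).trace = 0 := by
  intro p hp
  have hnPp : nP p = suNormal (projM (f p)) := by rw [hnP]; rfl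
  have htr := trace_projM (hfz p hp)
  have hcomm := commute_suNormal (projM (f p))
  rw [hnPp]
  refine ⟨conjTranspose_suNormal (isHermitian_projM _), trace_suNormal hN htr, ?_,
    mul_eq_zero_of_right _ (trace_mul_mcomm_eq_zero hcomm _),
    mul_eq_zero_of_right _ (trace_mul_mcomm_eq_zero hcomm _)⟩
  rw [trace_suNormal_mul_self hN (projM_mul_self (hfz p hp)) htr]
  norm_num

theorem stmt14 {N : ℕ} (hN : 2 ≤ N) (Ω : Set (ℝ × ℝ)) (hΩ : IsOpen Ω)
    (f : ℝ × ℝ → Vec N) (hf : ContDiffOn ℝ 1 f Ω) (hfz : ∀ p ∈ Ω, f p ≠ 0)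
    (nP : ℝ × ℝ → Matrix (Fin N) (Fin N) ℂ)
    (hnP : nP = fun p => (Complex.I * (Real.sqrt 2 : ℂ)) •
      ((Real.sqrt (((N : ℝ) - 1) / (N : ℝ)) : ℂ) • (1 : Matrix (Fin N) (Fin N) ℂ)
        - (Real.sqrt ((N : ℝ) / ((N : ℝ) - 1)) : ℂ) • projM (f p))) :
    ∀ p ∈ Ω,
      (nP p)ᴴ = - nP p ∧ (nP p).trace = 0 ∧
      -(1 / 2 : ℂ) * (nP p * nP p).trace = 1 ∧
      -(1 / 2 : ℂ) * (nP p * mcomm (pdv dL (fun q => projM (f q)) p) (projM (f p))).trace = 0 ∧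
      -(1 / 2 : ℂ) * (nP p * mcomm (pdv dR (fun q => projM (f q)) p) (projM (f p))).trace = 0 :=
  stmt14_general hN Ω f hfz nP hnP
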